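/- arXiv:1505.06052 — 2 statements merged into one kernel-verified Lean document; each statement's English description precedes it below -/
import Mathlib

section
/- Let N ≥ 2 and ζ₁ < ζ₂ < ⋯ < ζ_{N+1} be real numbers; for j = 1,…,N set Ω_j = {x ∈ ℝ² : ζ_j < x₂ < ζ_{j+1}}. Let G : ℝ² × ℝ² → ℂ be a kernel, let f : ℝ² → ℂ be supported in {x : ζ₁ < x₂ < ζ_{N+1}}, and set f_j = f·1_{Ω_j}. Let f̄_j⁺ : ℝ² → ℂ (j = 1,…,N−1) satisfy: f̄_1⁺ = f_1; f̄_j⁺ is supported in the closure of Ω_j; and for every j = 1,…,N−2 and every x with x₂ > ζ_{j+2}, ∫_{Ω_j} f̄_j⁺(y)G(x,y)dy = ∫_{Ω_{j+1}} (f̄_{j+1}⁺(y) − f_{j+1}(y))G(x,y)dy. Assume all functions y ↦ f̄_j⁺(y)G(x,y) and y ↦ f(y)G(x,y) occurring below are Bochner integrable. Then for every i = 1,…,N−1 and every x ∈ Ω_{i+1}: ∫_{ℝ²} (f̄_i⁺(y) + f_{i+1}(y))·G(x,y) dy = ∫_{{y : y₂ < ζ_{i+2}}} f(y)·G(x,y)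 dy. -/
open MeasureTheory

/-- The horizontal layer `Ω_j = {x ∈ ℝ² : ζ_j < x₂ < ζ_{j+1}}`. -/
def layer (ζ : ℕ → ℝ) (j : ℕ) : Set (ℝ × ℝ) := {x : ℝ × ℝ | ζ j < x.2 ∧ x.2 < ζ (j + 1)}

/-- The piece `f_j = f·1_{Ω_j}` of the source `f`. -/
noncomputable def piece (ζ : ℕ → ℝ) (f : ℝ × ℝ → ℂ) (j : ℕ) : ℝ × ℝ → ℂ :=
  (layer ζ j).indicator f

/-- A horizontal line has measure zero in the plane. -/
lemma plane_null (c : ℝ) : (volume : Measure (ℝ × ℝ)) {y : ℝ × ℝ | y.2 = c} = 0 := by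
  have h : {y : ℝ × ℝ | y.2 = c} = Set.univ ×ˢ ({c} : Set ℝ) := by
    ext ⟨a, b⟩; simp [Set.mem_prod, eq_comm]
  rw [h, show (volume : Measure (ℝ × ℝ)) = (volume : Measure ℝ).prod volume from rfl,
    Measure.prod_prod]
  simp

lemma layer_meas (ζ : ℕ → ℝ) (j : ℕ) : MeasurableSet (layer ζ j) :=
  (measurableSet_Ioo : MeasurableSet (Set.Ioo (ζ j) (ζ (j + 1)))).preimage measurable_snd

lemma halfplane_meas (c : ℝ) : MeasurableSet {y : ℝ × ℝ | y.2 < c} :=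
  (measurableSet_Iio : MeasurableSet (Set.Iio c)).preimage measurable_snd

/-- Splitting a half-plane integral at an intermediate height. -/
lemma split_integral (c₁ c₂ : ℝ) (h : c₁ < c₂) (g : ℝ × ℝ → ℂ) (hg : Integrable g) :
    ∫ y in {y : ℝ × ℝ | y.2 < c₂}, g y
      = (∫ y in {y : ℝ × ℝ | y.2 < c₁}, g y)
        + ∫ y in {y : ℝ × ℝ | c₁ < y.2 ∧ y.2 < c₂}, g y := by
  have hmeasL : MeasurableSet {y : ℝ × ℝ | c₁ < y.2 ∧ y.2 < c₂} :=
    (measurableSet_Ioo : MeasurableSet (Set.Ioo c₁ c₂)).preimage measurable_snd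
  have hae : ({y : ℝ × ℝ | y.2 < c₂} : Set (ℝ × ℝ))
      =ᵐ[volume] (({y : ℝ × ℝ | y.2 < c₁} ∪ {y : ℝ × ℝ | c₁ < y.2 ∧ y.2 < c₂}) : Set (ℝ × ℝ)) := by
    rw [MeasureTheory.ae_eq_set]
    constructor
    · refine measure_mono_null (fun y hy => ?_) (plane_null c₁)
      obtain ⟨h2, hn⟩ := hy
      show y.2 = c₁
      rcases lt_trichotomy y.2 c₁ with h' | h' | h'
      · exact absurd (Or.inl h') hn
      · exact h'
      · exact absurd (Or.inr ⟨h', h2⟩) hn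
    · refine measure_mono_null (fun y hy => ?_) (measure_empty (μ := volume))
      obtain ⟨h1, h2⟩ := hy
      rcases h1 with h' | h'
      · exact absurd (lt_trans h' h) h2
      · exact absurd h'.2 h2
  rw [setIntegral_congr_set hae]
  exact setIntegral_union
    (Set.disjoint_left.mpr (fun y hy1 hy2 => absurd hy2.1 (not_lt.2 (le_of_lt hy1))))
    hmeasL hg.integrableOn hg.integrableOn

/-- Integral of a function supported in the closure of a layer reduces to the layer. -/
lemma integral_eq_layer (ζ : ℕ → ℝ) (j : ℕ) (g : ℝ × ℝ → ℂ)
    (hsupp : Function.support g ⊆ closure (layer ζ j)) :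
    ∫ y, g y = ∫ y in layer ζ j, g y := by
  set slab : Set (ℝ × ℝ) := {y : ℝ × ℝ | ζ j ≤ y.2 ∧ y.2 ≤ ζ (j + 1)} with hslab
  have hclosed : IsClosed slab :=
    (isClosed_Icc : IsClosed (Set.Icc (ζ j) (ζ (j + 1)))).preimage continuous_snd
  have hsub : Function.support g ⊆ slab :=
    hsupp.trans (closure_minimal (fun y hy => ⟨le_of_lt hy.1, le_of_lt hy.2⟩) hclosed)
  have h1 : ∫ y, g y = ∫ y in slab, g y := by
    rw [← integral_indicator hclosed.measurableSet, Set.indicator_eq_self.2 hsub]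
  have h2 : slab =ᵐ[volume] layer ζ j := by
    rw [MeasureTheory.ae_eq_set]
    constructor
    · refine measure_mono_null (fun y hy => ?_)
        (measure_union_null (plane_null (ζ j)) (plane_null (ζ (j + 1))))
      have ha : ζ j ≤ y.2 ∧ y.2 ≤ ζ (j + 1) := hy.1
      have hn : ¬(ζ j < y.2 ∧ y.2 < ζ (j + 1)) := hy.2
      rcases lt_or_eq_of_le ha.1 with h' | h'
      · refine Or.inr ?_
        show y.2 = ζ (j + 1)
        by_contra hne
        exact hn ⟨h', lt_of_le_of_ne ha.2 hne⟩
      · exact Or.inl h'.symm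
    · refine measure_mono_null (fun y hy => ?_) (measure_empty (μ := volume))
      have h1 : ζ j < y.2 ∧ y.2 < ζ (j + 1) := hy.1
      exact absurd (⟨le_of_lt h1.1, le_of_lt h1.2⟩ : ζ j ≤ y.2 ∧ y.2 ≤ ζ (j + 1)) hy.2
  rw [h1, setIntegral_congr_set h2]

/-- Theorem 2.1(ii) of the paper: after the upward source transfer steps, the `i`-th subproblem
solution equals, in the layer `Ω_{i+1}`, the field radiated by the part of the source below
`ζ_{i+2}`. -/
theorem stmt_3
    (N : ℕ) (hN : 2 ≤ N)
    (ζ : ℕ → ℝ) (hζ : ∀ j, 1 ≤ j → j ≤ N → ζ j < ζ (j + 1))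
    (G : ℝ × ℝ → ℝ × ℝ → ℂ)
    (f : ℝ × ℝ → ℂ)
    (hf_supp : Function.support f ⊆ {x : ℝ × ℝ | ζ 1 < x.2 ∧ x.2 < ζ (N + 1)})
    (fbar : ℕ → ℝ × ℝ → ℂ)
    (hfbar1 : fbar 1 = piece ζ f 1)
    (hfbar_supp : ∀ j, 1 ≤ j → j ≤ N - 1 →
      Function.support (fbar j) ⊆ closure (layer ζ j))
    (htransfer : ∀ j, 1 ≤ j → j ≤ N - 2 → ∀ x : ℝ × ℝ, ζ (j + 2) < x.2 →
      ∫ y in layer ζ j, fbar j y * G x y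
        = ∫ y in layer ζ (j + 1), (fbar (j + 1) y - piece ζ f (j + 1) y) * G x y)
    (hint_fbar : ∀ j, 1 ≤ j → j ≤ N - 1 → ∀ x : ℝ × ℝ,
      Integrable (fun y => fbar j y * G x y))
    (hint_f : ∀ x : ℝ × ℝ, Integrable (fun y => f y * G x y)) :
    ∀ i, 1 ≤ i → i ≤ N - 1 → ∀ x ∈ layer ζ (i + 1),
      ∫ y : ℝ × ℝ, (fbar i y + piece ζ f (i + 1) y) * G x y
        = ∫ y in {y : ℝ × ℝ | y.2 < ζ (i + 2)}, f y * G x y := by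
  -- On any layer, the piece agrees with `f`; hence set integrals agree.
  have hpiece_int : ∀ (j : ℕ) (x : ℝ × ℝ),
      ∫ y in layer ζ j, piece ζ f j y * G x y = ∫ y in layer ζ j, f y * G x y := by
    intro j x
    exact setIntegral_congr_fun (layer_meas ζ j)
      (fun y hy => by simp [piece, Set.indicator_of_mem hy])
  have hpiece_intgr : ∀ (j : ℕ) (x : ℝ × ℝ),
      IntegrableOn (fun y => piece ζ f j y * G x y) (layer ζ j) := by
    intro j x
    exact (hint_f x).integrableOn.congr_fun
      (fun y hy => by simp [piece, Set.indicator_of_mem hy]) (layer_meas ζ j)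
  -- Key telescoping identity.
  have key : ∀ i, 1 ≤ i → i ≤ N - 1 → ∀ x : ℝ × ℝ, ζ (i + 1) < x.2 →
      ∫ y in layer ζ i, fbar i y * G x y
        = ∫ y in {y : ℝ × ℝ | y.2 < ζ (i + 1)}, f y * G x y := by
    intro i hi
    induction i, hi using Nat.le_induction with
    | base =>
      intro _ x _
      rw [hfbar1, hpiece_int 1 x]
      have hsplit := split_integral (ζ 1) (ζ 2) (hζ 1 le_rfl (by omega)) _ (hint_f x)
      have hzero : ∫ y in {y : ℝ × ℝ | y.2 < ζ 1}, f y * G x y = 0 := by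
        apply setIntegral_eq_zero_of_forall_eq_zero
        intro y hy
        have : f y = 0 := by
          by_contra hne
          exact absurd (hf_supp hne).1 (not_lt.2 (le_of_lt hy))
        rw [this, zero_mul]
      have hlayer : layer ζ 1 = {y : ℝ × ℝ | ζ 1 < y.2 ∧ y.2 < ζ 2} := rfl
      rw [hlayer]
      rw [show ζ (1 + 1) = ζ 2 from rfl]
      rw [hsplit, hzero, zero_add]
    | succ i hi ih =>
      intro hle x hx
      have hiN2 : i ≤ N - 2 := by omega
      have hiN1 : i ≤ N - 1 := by omega
      have hi1N1 : i + 1 ≤ N - 1 := hle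
      have htr := htransfer i hi hiN2 x hx
      -- split the transferred integral
      have hfbar_intgr : IntegrableOn (fun y => fbar (i + 1) y * G x y) (layer ζ (i + 1)) :=
        (hint_fbar (i + 1) (by omega) hi1N1 x).integrableOn
      have hsub : ∫ y in layer ζ (i + 1), (fbar (i + 1) y - piece ζ f (i + 1) y) * G x y
          = (∫ y in layer ζ (i + 1), fbar (i + 1) y * G x y)
            - ∫ y in layer ζ (i + 1), piece ζ f (i + 1) y * G x y := by
        simp_rw [sub_mul]
        exact integral_sub hfbar_intgr (hpiece_intgr (i + 1) x)
      have hx' : ζ (i + 1) < x.2 :=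
        lt_trans (hζ (i + 1) (by omega) (by omega)) hx
      have hih := ih hiN1 x hx'
      have hmain : ∫ y in layer ζ (i + 1), fbar (i + 1) y * G x y
          = (∫ y in {y : ℝ × ℝ | y.2 < ζ (i + 1)}, f y * G x y)
            + ∫ y in layer ζ (i + 1), f y * G x y := by
        have := htr
        rw [hsub] at this
        have h' : ∫ y in layer ζ (i + 1), fbar (i + 1) y * G x y
            = (∫ y in layer ζ i, fbar i y * G x y)
              + ∫ y in layer ζ (i + 1), piece ζ f (i + 1) y * G x y := by
          rw [this]; ring
        rw [h', hih, hpiece_int (i + 1) x]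
      rw [hmain]
      have hsplit := split_integral (ζ (i + 1)) (ζ (i + 2))
        (hζ (i + 1) (by omega) (by omega)) _ (hint_f x)
      have hlayer : layer ζ (i + 1) = {y : ℝ × ℝ | ζ (i + 1) < y.2 ∧ y.2 < ζ (i + 2)} := rfl
      rw [hlayer, ← hsplit]
  -- Now the main statement.
  intro i hi1 hiN x hx
  have hx1 : ζ (i + 1) < x.2 := hx.1
  -- global integrability of the piece term
  have hpiece_eq : (fun y => piece ζ f (i + 1) y * G x y)
      = (layer ζ (i + 1)).indicator (fun y => f y * G x y) := by
    funext y
    by_cases h : y ∈ layer ζ (i + 1)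
    · simp [piece, Set.indicator_of_mem h]
    · simp [piece, Set.indicator_of_notMem h]
  have hpiece_glob : Integrable (fun y => piece ζ f (i + 1) y * G x y) := by
    rw [hpiece_eq]
    exact (hint_f x).indicator (layer_meas ζ (i + 1))
  have hadd : ∫ y : ℝ × ℝ, (fbar i y + piece ζ f (i + 1) y) * G x y
      = (∫ y : ℝ × ℝ, fbar i y * G x y) + ∫ y : ℝ × ℝ, piece ζ f (i + 1) y * G x y := by
    simp_rw [add_mul]
    exact integral_add (hint_fbar i hi1 hiN x) hpiece_glob
  rw [hadd]
  have h1 : ∫ y : ℝ × ℝ, fbar i y * G x y = ∫ y in layer ζ i, fbar i y * G x y := by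
    apply integral_eq_layer
    intro y hy
    apply hfbar_supp i hi1 hiN
    intro hzero
    exact hy (by simp [hzero])
  have h2 : ∫ y : ℝ × ℝ, piece ζ f (i + 1) y * G x y
      = ∫ y in layer ζ (i + 1), f y * G x y := by
    rw [hpiece_eq, integral_indicator (layer_meas ζ (i + 1))]
  rw [h1, h2, key i hi1 hiN x hx1]
  have hsplit := split_integral (ζ (i + 1)) (ζ (i + 2))
    (hζ (i + 1) (by omega) (by omega)) _ (hint_f x)
  have hlayer : layer ζ (i + 1) = {y : ℝ × ℝ | ζ (i + 1) < y.2 ∧ y.2 < ζ (i + 2)} := rfl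
  rw [hlayer, ← hsplit]
end

section
/- Let k > 0, let a₁, a₂, J : ℝ² → ℂ with a₁, a₂ differentiable and J(y) ≠ 0 for all y, let u : ℝ² → ℂ be twice differentiable, let β : ℝ → ℝ be twice differentiable, and let f̄, f : ℝ² → ℂ. Assume that J(y)⁻¹( ∂₁(a₁∂₁u)(y) + ∂₂(a₂∂₂u)(y) ) + k²u(y) = −f̄(y) − f(y) for every y ∈ ℝ². Write (βu)(y) = β(y₂)u(y). Then at every point y ∈ ℝ² with f̄(y) = 0, one has J(y)⁻¹( ∂₁(a₁∂₁(βu))(y) + ∂₂(a₂∂₂(βu))(y) ) + k²β(y₂)u(y) = J(y)⁻¹·∂₂( z ↦ a₂(z)u(z)β′(z₂) )(y) + J(y)⁻¹·β′(y₂)·a₂(y)·∂₂u(y) − β(y₂)f(y). -/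
/-!
Since `β` depends on `y₂` only, `∂₁(βu) = β ∂₁u` and `∂₂(βu) = β′u + β ∂₂u`. Expanding the two fluxes
`a₁ ∂₁(βu)` and `a₂ ∂₂(βu)` by the product rule, the left-hand side becomes
`β (J⁻¹∇·(A∇u) + k²u) + J⁻¹∂₂(a₂uβ′) + J⁻¹β′a₂∂₂u`, and where `f̄ = 0` the equation for `u` replaces
the first summand by `-βf`.
-/

/-- Partial derivative in the first coordinate direction. -/
noncomputable def pd1 (f : ℝ × ℝ → ℂ) (p : ℝ × ℝ) : ℂ := fderiv ℝ f p (1, 0)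

/-- Partial derivative in the second coordinate direction. -/
noncomputable def pd2 (f : ℝ × ℝ → ℂ) (p : ℝ × ℝ) : ℂ := fderiv ℝ f p (0, 1)

section PartialDerivatives

variable {f g : ℝ × ℝ → ℂ} {β : ℝ → ℝ} {z : ℝ × ℝ}

lemma pd1_mul (hf : DifferentiableAt ℝ f z) (hg : DifferentiableAt ℝ g z) :
    pd1 (fun w => f w * g w) z = pd1 f z * g z + f z * pd1 g z := by
  simp only [pd1, fderiv_fun_mul hf hg, add_apply, smul_apply, smul_eq_mul]
  ring

lemma pd2_mul (hf : DifferentiableAt ℝ f z) (hg : DifferentiableAt ℝ g z) :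
    pd2 (fun w => f w * g w) z = pd2 f z * g z + f z * pd2 g z := by
  simp only [pd2, fderiv_fun_mul hf hg, add_apply, smul_apply, smul_eq_mul]
  ring

lemma pd2_add (hf : DifferentiableAt ℝ f z) (hg : DifferentiableAt ℝ g z) :
    pd2 (fun w => f w + g w) z = pd2 f z + pd2 g z := by
  simp only [pd2, fderiv_fun_add hf hg, add_apply]

lemma hasFDerivAt_ofReal_comp_snd (hβ : DifferentiableAt ℝ β z.2) :
    HasFDerivAt (fun w : ℝ × ℝ => (β w.2 : ℂ))
      (Complex.ofRealCLM.comp (deriv β z.2 • ContinuousLinearMap.snd ℝ ℝ ℝ)) z :=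
  Complex.ofRealCLM.hasFDerivAt.comp z (hβ.hasDerivAt.comp_hasFDerivAt z hasFDerivAt_snd)

lemma pd1_ofReal_comp_snd (hβ : DifferentiableAt ℝ β z.2) :
    pd1 (fun w => (β w.2 : ℂ)) z = 0 := by
  simp [pd1, (hasFDerivAt_ofReal_comp_snd hβ).fderiv]

lemma pd2_ofReal_comp_snd (hβ : DifferentiableAt ℝ β z.2) :
    pd2 (fun w => (β w.2 : ℂ)) z = deriv β z.2 := by
  simp [pd2, (hasFDerivAt_ofReal_comp_snd hβ).fderiv]

lemma pd1_ofReal_comp_snd_mul (hβ : DifferentiableAt ℝ β z.2) (hg : DifferentiableAt ℝ g z) :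
    pd1 (fun w => (β w.2 : ℂ) * g w) z = β z.2 * pd1 g z := by
  rw [pd1_mul (hasFDerivAt_ofReal_comp_snd hβ).differentiableAt hg, pd1_ofReal_comp_snd hβ,
    zero_mul, zero_add]

lemma pd2_ofReal_comp_snd_mul (hβ : DifferentiableAt ℝ β z.2) (hg : DifferentiableAt ℝ g z) :
    pd2 (fun w => (β w.2 : ℂ) * g w) z = deriv β z.2 * g z + β z.2 * pd2 g z := by
  rw [pd2_mul (hasFDerivAt_ofReal_comp_snd hβ).differentiableAt hg, pd2_ofReal_comp_snd hβ]

lemma ContDiff.differentiable_pd1 (hf : ContDiff ℝ 2 f) : Differentiable ℝ (pd1 f) :=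
  ((hf.fderiv_right le_rfl).clm_apply contDiff_const).differentiable one_ne_zero

lemma ContDiff.differentiable_pd2 (hf : ContDiff ℝ 2 f) : Differentiable ℝ (pd2 f) :=
  ((hf.fderiv_right le_rfl).clm_apply contDiff_const).differentiable one_ne_zero

end PartialDerivatives

section Flux

variable {a u : ℝ × ℝ → ℂ} {β : ℝ → ℝ} {y : ℝ × ℝ}

lemma pd1_flux_ofReal_comp_snd_mul (hβ : Differentiable ℝ β) (hu : ContDiff ℝ 2 u)
    (ha : DifferentiableAt ℝ a y) :
    pd1 (fun z => a z * pd1 (fun w => (β w.2 : ℂ) * u w) z) y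
      = β y.2 * pd1 (fun z => a z * pd1 u z) y := by
  have hud := hu.differentiable two_ne_zero
  have hflux : (fun z => a z * pd1 (fun w => (β w.2 : ℂ) * u w) z)
      = fun z => (β z.2 : ℂ) * (a z * pd1 u z) := by
    funext z
    rw [pd1_ofReal_comp_snd_mul (hβ z.2) (hud z)]
    ring
  rw [hflux, pd1_ofReal_comp_snd_mul (hβ y.2) (ha.fun_mul (hu.differentiable_pd1 y))]

lemma pd2_flux_ofReal_comp_snd_mul (hβ : ContDiff ℝ 2 β) (hu : ContDiff ℝ 2 u)
    (ha : DifferentiableAt ℝ a y) :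
    pd2 (fun z => a z * pd2 (fun w => (β w.2 : ℂ) * u w) z) y
      = pd2 (fun z => a z * u z * Complex.ofReal (deriv β z.2)) y + deriv β y.2 * a y * pd2 u y
        + β y.2 * pd2 (fun z => a z * pd2 u z) y := by
  have hud := hu.differentiable two_ne_zero
  have hβd := hβ.differentiable two_ne_zero
  have hβ'd : Differentiable ℝ (deriv β) :=
    (hβ.iterate_deriv' 1 1).differentiable one_ne_zero
  have hflux : (fun z => a z * pd2 (fun w => (β w.2 : ℂ) * u w) z)
      = fun z => a z * u z * Complex.ofReal (deriv β z.2) + (β z.2 : ℂ) * (a z * pd2 u z) := by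
    funext z
    rw [pd2_ofReal_comp_snd_mul (hβd z.2) (hud z)]
    ring
  have ha_pd2u : DifferentiableAt ℝ (fun z => a z * pd2 u z) y :=
    ha.fun_mul (hu.differentiable_pd2 y)
  have hβ_diff := (hasFDerivAt_ofReal_comp_snd (hβd y.2)).differentiableAt
  have hβ'_diff := (hasFDerivAt_ofReal_comp_snd (hβ'd y.2)).differentiableAt
  rw [hflux, pd2_add ((ha.fun_mul (hud y)).fun_mul hβ'_diff) (hβ_diff.fun_mul ha_pd2u),
    pd2_ofReal_comp_snd_mul (hβd y.2) ha_pd2u]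
  ring

end Flux

theorem stmt_6_general
    (k : ℝ)
    (a₁ a₂ J : ℝ × ℝ → ℂ)
    (ha₁ : Differentiable ℝ a₁) (ha₂ : Differentiable ℝ a₂)
    (u : ℝ × ℝ → ℂ) (hu : ContDiff ℝ 2 u)
    (β : ℝ → ℝ) (hβ : ContDiff ℝ 2 β)
    (fbar f : ℝ × ℝ → ℂ)
    (hueq : ∀ y : ℝ × ℝ,
      (J y)⁻¹ * (pd1 (fun z => a₁ z * pd1 u z) y + pd2 (fun z => a₂ z * pd2 u z) y)
        + (k : ℂ) ^ 2 * u y = -fbar y - f y) :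
    ∀ y : ℝ × ℝ, fbar y = 0 →
      (J y)⁻¹ * (pd1 (fun z => a₁ z * pd1 (fun w => (β w.2 : ℂ) * u w) z) y
          + pd2 (fun z => a₂ z * pd2 (fun w => (β w.2 : ℂ) * u w) z) y)
        + (k : ℂ) ^ 2 * (β y.2 : ℂ) * u y
      = (J y)⁻¹ * pd2 (fun z => a₂ z * u z * (Complex.ofReal (deriv β z.2))) y
        + (J y)⁻¹ * (Complex.ofReal (deriv β y.2)) * a₂ y * pd2 u y
        - (β y.2 : ℂ) * f y := by
  intro y hfbar
  rw [pd1_flux_ofReal_comp_snd_mul (hβ.differentiable two_ne_zero) hu (ha₁ y),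
    pd2_flux_ofReal_comp_snd_mul hβ hu (ha₂ y)]
  linear_combination (β y.2 : ℂ) * (hueq y - hfbar)

/-- Equation (2.14) of the paper: the equivalent form of the source transfer operator.  If `u`
solves the diagonal PML equation `J⁻¹∇·(A∇u) + k²u = −f̄ − f`, then at every point where `f̄`
vanishes, `J⁻¹∇·(A∇(βu)) + k²βu = J⁻¹∇·(A u ∇β) + J⁻¹∇β·(A∇u) − βf`. -/
theorem stmt_6
    (k : ℝ) (hk : 0 < k)
    (a₁ a₂ J : ℝ × ℝ → ℂ)
    (ha₁ : Differentiable ℝ a₁) (ha₂ : Differentiable ℝ a₂)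
    (hJ : ∀ y : ℝ × ℝ, J y ≠ 0)
    (u : ℝ × ℝ → ℂ) (hu : ContDiff ℝ 2 u)
    (β : ℝ → ℝ) (hβ : ContDiff ℝ 2 β)
    (fbar f : ℝ × ℝ → ℂ)
    (hueq : ∀ y : ℝ × ℝ,
      (J y)⁻¹ * (pd1 (fun z => a₁ z * pd1 u z) y + pd2 (fun z => a₂ z * pd2 u z) y)
        + (k : ℂ) ^ 2 * u y = -fbar y - f y) :
    ∀ y : ℝ × ℝ, fbar y = 0 →
      (J y)⁻¹ * (pd1 (fun z => a₁ z * pd1 (fun w => (β w.2 : ℂ) * u w) z) y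
          + pd2 (fun z => a₂ z * pd2 (fun w => (β w.2 : ℂ) * u w) z) y)
        + (k : ℂ) ^ 2 * (β y.2 : ℂ) * u y
      = (J y)⁻¹ * pd2 (fun z => a₂ z * u z * (Complex.ofReal (deriv β z.2))) y
        + (J y)⁻¹ * (Complex.ofReal (deriv β y.2)) * a₂ y * pd2 u y
        - (β y.2 : ℂ) * f y :=
  stmt_6_general k a₁ a₂ J ha₁ ha₂ u hu β hβ fbar f hueq
end
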